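/- arXiv:1501.02328 — 2 statements merged into one kernel-verified Lean document; each statement's English description precedes it below -/
import Mathlib

section
/- Let n ≥ 1. The map φ : Matrix (Fin n) (Fin n) ℝ → (Sym(n,ℝ)/ℝ·I) × ℝ, φ(X) = (X Xᵀ + ℝ·I, det X), is surjective, and its fibres coincide exactly with the orbits of the right action of SO(n) given by X ↦ X C⁻¹: that is, φ(X) = φ(Y) if and only if Y = X C for some C ∈ SO(n). -/
/-!
Given a symmetric `A` and a target determinant `t`, the function `c ↦ det (A + c I) = ∏ (λᵢ + c)` is
continuous, vanishes at `c = -min λᵢ` and is unbounded above, so for some `c` the positive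
semidefinite matrix `A + c I` has determinant `t²`; its square root, corrected by a reflection
if needed, is a preimage of `(A + ℝ·I, t)`.

Conversely, if `X Xᵀ - Y Yᵀ = r I` and `det X = det Y`, then `r = 0`, because adding `r I` with
`r > 0` strictly increases the determinant of a positive semidefinite matrix. Equal Gram matrices
`X Xᵀ = Y Yᵀ` give a linear isometry sending `Xᵀ v` to `Yᵀ v`; extending it to the whole space
yields an orthogonal `C` with `Y = X C`. If `det C = -1`, then `det X = 0`, and composing `C` with
the Householder reflection along a vector of `ker X` brings `C` into `SO(n)`.
-/

open Matrix

/-- The real vector space of real symmetric (self-adjoint) `n × n` matrices,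
as a submodule of the matrix space. -/
abbrev SymSub (n : ℕ) : Submodule ℝ (Matrix (Fin n) (Fin n) ℝ) :=
  selfAdjoint.submodule ℝ (Matrix (Fin n) (Fin n) ℝ)

lemma one_mem_symSub (n : ℕ) : (1 : Matrix (Fin n) (Fin n) ℝ) ∈ SymSub n :=
  IsSelfAdjoint.one _

lemma mulT_mem_symSub {n m : ℕ} (X : Matrix (Fin n) (Fin m) ℝ) : X * Xᵀ ∈ SymSub n := by
  have := Matrix.isHermitian_mul_conjTranspose_self X
  rw [Matrix.conjTranspose_eq_transpose_of_trivial] at this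
  exact this

lemma conj_mem_symSub {n : ℕ} (C : Matrix (Fin n) (Fin n) ℝ) (A : SymSub n) :
    C * (A : Matrix (Fin n) (Fin n) ℝ) * Cᵀ ∈ SymSub n := by
  have := Matrix.isHermitian_mul_mul_conjTranspose C (A.2 : (A : Matrix (Fin n) (Fin n) ℝ).IsHermitian)
  rw [Matrix.conjTranspose_eq_transpose_of_trivial] at this
  exact this

/-- The line `ℝ·I` inside the space of symmetric matrices. -/
noncomputable def lineI (n : ℕ) : Submodule ℝ (SymSub n) :=
  Submodule.span ℝ {(⟨1, one_mem_symSub n⟩ : SymSub n)}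

/-- The map `φ : X ↦ (X Xᵀ + ℝ·I, det X)`. -/
noncomputable def phi (n : ℕ) (X : Matrix (Fin n) (Fin n) ℝ) :
    (SymSub n ⧸ lineI n) × ℝ :=
  (Submodule.Quotient.mk ⟨X * Xᵀ, mulT_mem_symSub X⟩, X.det)

open scoped ComplexOrder

lemma prod_lt_prod_add {ι : Type*} [Fintype ι] [Nonempty ι] {μ : ι → ℝ} (hμ : ∀ i, 0 ≤ μ i)
    {r : ℝ} (hr : 0 < r) : ∏ i, μ i < ∏ i, (μ i + r) := by
  by_cases hpos : ∀ i, 0 < μ i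
  · exact Finset.prod_lt_prod_of_nonempty (fun i _ => hpos i) (fun i _ => by linarith)
      Finset.univ_nonempty
  · push Not at hpos
    obtain ⟨i, hi⟩ := hpos
    rw [Finset.prod_eq_zero (Finset.mem_univ i) (le_antisymm hi (hμ i))]
    exact Finset.prod_pos fun j _ => by linarith [hμ j]

lemma exists_prod_add_eq {ι : Type*} [Fintype ι] [Nonempty ι] (μ : ι → ℝ) {t : ℝ}
    (ht : 0 ≤ t) : ∃ c, (∀ i, 0 ≤ μ i + c) ∧ ∏ i, (μ i + c) = t := by
  obtain ⟨i₀, hi₀⟩ := Finite.exists_min μ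
  have hcont : Continuous fun c => ∏ i, (μ i + c) := by fun_prop
  have hlow : ∏ i, (μ i + -μ i₀) = 0 := Finset.prod_eq_zero (Finset.mem_univ i₀) (add_neg_cancel _)
  have hhigh : t ≤ ∏ i, (μ i + (t + 1 - μ i₀)) :=
    calc t ≤ (t + 1) ^ Fintype.card ι := by
          linarith [le_self_pow₀ (by linarith : (1 : ℝ) ≤ t + 1) (Fintype.card_ne_zero (α := ι))]
      _ = ∏ _i : ι, (t + 1) := by rw [Finset.prod_const, Finset.card_univ]
      _ ≤ ∏ i, (μ i + (t + 1 - μ i₀)) :=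
          Finset.prod_le_prod (fun _ _ => by positivity) (fun i _ => by linarith [hi₀ i])
  obtain ⟨c, hc, hct⟩ := intermediate_value_Icc (by linarith : -μ i₀ ≤ t + 1 - μ i₀)
    hcont.continuousOn ⟨hlow ▸ ht, hhigh⟩
  exact ⟨c, fun i => by linarith [hi₀ i, hc.1], hct⟩

lemma LinearMap.exists_linearIsometry_comp_eq {𝕜 U V : Type*} [RCLike 𝕜] [AddCommGroup U]
    [Module 𝕜 U] [NormedAddCommGroup V] [InnerProductSpace 𝕜 V] [FiniteDimensional 𝕜 V]
    (f g : U →ₗ[𝕜] V) (h : ∀ u, ‖f u‖ = ‖g u‖) :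
    ∃ Φ : V →ₗᵢ[𝕜] V, ∀ u, Φ (f u) = g u := by
  have hker : LinearMap.ker f ≤ LinearMap.ker g := fun u hu => by
    rw [LinearMap.mem_ker, ← norm_eq_zero, ← h, norm_eq_zero]
    exact hu
  let L : LinearMap.range f →ₗ[𝕜] V :=
    (LinearMap.ker f).liftQ g hker ∘ₗ f.quotKerEquivRange.symm
  have hL : ∀ u, L ⟨f u, LinearMap.mem_range_self f u⟩ = g u := fun u => by
    simp [L, LinearMap.quotKerEquivRange_symm_apply_image]
  let Liso : LinearMap.range f →ₗᵢ[𝕜] V :=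
    ⟨L, by rintro ⟨-, u, rfl⟩; rw [hL]; exact (h u).symm⟩
  exact ⟨Liso.extend, fun u => (Liso.extend_apply ⟨f u, _⟩).trans (hL u)⟩

namespace Matrix

section Householder

variable {ι K : Type*} [Fintype ι] [DecidableEq ι] [Field K]

/-- The reflection in the hyperplane `v⊥`; when `v ⬝ᵥ v = 0` the division by zero makes it `1`. -/
def householder (v : ι → K) : Matrix ι ι K :=
  1 - (2 / (v ⬝ᵥ v)) • vecMulVec v v

variable {v : ι → K}

@[simp]
lemma transpose_householder (v : ι → K) : (householder v)ᵀ = householder v := by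
  simp [householder]

lemma householder_mul_self (hv : v ⬝ᵥ v ≠ 0) : householder v * householder v = 1 := by
  simp only [householder, Matrix.sub_mul, Matrix.mul_sub, Matrix.one_mul, Matrix.mul_one,
    Matrix.smul_mul, Matrix.mul_smul, vecMulVec_mul_vecMulVec, vecMulVec_smul, smul_smul]
  rw [div_mul_cancel₀ 2 hv]
  module

lemma det_householder (hv : v ⬝ᵥ v ≠ 0) : (householder v).det = -1 := by
  rw [householder, sub_eq_add_neg, ← neg_smul, ← smul_vecMulVec, vecMulVec_eq (Fin 1),
    det_one_add_replicateCol_mul_replicateRow, dotProduct_smul, smul_eq_mul]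
  field_simp
  ring

lemma mul_householder_of_mulVec_eq_zero {κ : Type*} {X : Matrix κ ι K} (hX : X *ᵥ v = 0) :
    X * householder v = X := by
  simp [householder, Matrix.mul_sub, Matrix.mul_smul, mul_vecMulVec, hX]

lemma exists_reflection_mul_eq_self_of_det_eq_zero [LinearOrder K] [IsStrictOrderedRing K]
    {X : Matrix ι ι K} (hX : X.det = 0) :
    ∃ R : Matrix ι ι K, R * Rᵀ = 1 ∧ R.det = -1 ∧ X * R = X := by
  obtain ⟨v, hv, hXv⟩ := exists_mulVec_eq_zero_iff.mpr hX
  have hvv : v ⬝ᵥ v ≠ 0 := fun h => hv (dotProduct_self_eq_zero.mp h)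
  exact ⟨householder v, by rw [transpose_householder, householder_mul_self hvv],
    det_householder hvv, mul_householder_of_mulVec_eq_zero hXv⟩

end Householder

variable {𝕜 n : Type*} [RCLike 𝕜] [Fintype n] [DecidableEq n]

lemma exists_unitary_mul_eq_of_mul_conjTranspose_eq {X Y : Matrix n n 𝕜}
    (h : X * Xᴴ = Y * Yᴴ) : ∃ C : Matrix n n 𝕜, C * Cᴴ = 1 ∧ Y = X * C := by
  let T := toEuclideanCLM (n := n) (𝕜 := 𝕜)
  have hnorm : ∀ (Z : Matrix n n 𝕜) v, ‖T Zᴴ v‖ ^ 2 = RCLike.re (inner 𝕜 v (T (Z * Zᴴ) v)) :=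
    fun Z v => by
      rw [show Z * Zᴴ = star Zᴴ * Zᴴ by rw [star_eq_conjTranspose, conjTranspose_conjTranspose],
        map_mul, map_star, ContinuousLinearMap.star_eq_adjoint, mul_apply_eq_comp,
        ContinuousLinearMap.adjoint_inner_right, inner_self_eq_norm_sq]
  obtain ⟨Φ, hΦ⟩ := LinearMap.exists_linearIsometry_comp_eq (T Xᴴ).toLinearMap (T Yᴴ).toLinearMap
    fun v => (sq_eq_sq₀ (norm_nonneg _) (norm_nonneg _)).mp <| by
      rw [ContinuousLinearMap.coe_coe, ContinuousLinearMap.coe_coe, hnorm, hnorm, h]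
  let D := T.symm Φ.toContinuousLinearMap
  have hD : D * Xᴴ = Yᴴ := EquivLike.injective T <| by
    rw [map_mul, StarAlgEquiv.apply_symm_apply]
    ext1 v
    exact hΦ v
  have hDD : Dᴴ * D = 1 := EquivLike.injective T <| by
    rw [map_mul, ← star_eq_conjTranspose, map_star, StarAlgEquiv.apply_symm_apply, map_one,
      ContinuousLinearMap.star_eq_adjoint, ContinuousLinearMap.mul_def,
      LinearIsometry.adjoint_comp_self]
  refine ⟨Dᴴ, by rwa [conjTranspose_conjTranspose], ?_⟩
  rw [← conjTranspose_conjTranspose Y, ← hD, conjTranspose_mul, conjTranspose_conjTranspose]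

namespace IsHermitian

variable {A : Matrix n n 𝕜} (hA : A.IsHermitian)
include hA

lemma add_smul_one_eq_conj (r : ℝ) :
    A + r • (1 : Matrix n n 𝕜) = Unitary.conjStarAlgAut 𝕜 _ hA.eigenvectorUnitary
      (diagonal fun i => ((hA.eigenvalues i + r : ℝ) : 𝕜)) := by
  have hdiag : (diagonal fun i => ((hA.eigenvalues i + r : ℝ) : 𝕜)) =
      diagonal (RCLike.ofReal ∘ hA.eigenvalues) + (r : 𝕜) • 1 := by
    rw [← diagonal_one, ← diagonal_smul, diagonal_add]
    simp
  rw [hdiag, map_add, map_smul, map_one, ← hA.spectral_theorem,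
    RCLike.real_smul_eq_coe_smul (K := 𝕜)]

lemma det_add_smul_one (r : ℝ) :
    (A + r • (1 : Matrix n n 𝕜)).det = ∏ i, ((hA.eigenvalues i + r : ℝ) : 𝕜) := by
  rw [hA.add_smul_one_eq_conj, Unitary.conjStarAlgAut_apply, det_mul_right_comm,
    Unitary.mul_star_self_of_mem hA.eigenvectorUnitary.2, one_mul, det_diagonal]

lemma posSemidef_add_smul_one {r : ℝ} (hr : ∀ i, 0 ≤ hA.eigenvalues i + r) :
    (A + r • (1 : Matrix n n 𝕜)).PosSemidef := by
  rw [hA.add_smul_one_eq_conj, Unitary.conjStarAlgAut_apply]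
  exact (posSemidef_diagonal_iff.mpr fun i => RCLike.ofReal_nonneg.mpr (hr i))
    |>.mul_mul_conjTranspose_same (hA.eigenvectorUnitary : Matrix n n 𝕜)

end IsHermitian

namespace PosSemidef

lemma det_lt_det_add_smul_one [Nonempty n] {A : Matrix n n 𝕜} (hA : A.PosSemidef) {r : ℝ}
    (hr : 0 < r) : A.det < (A + r • (1 : Matrix n n 𝕜)).det := by
  rw [hA.isHermitian.det_add_smul_one, hA.isHermitian.det_eq_prod_eigenvalues,
    ← RCLike.ofReal_prod, ← RCLike.ofReal_prod, RCLike.ofReal_lt_ofReal]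
  exact prod_lt_prod_add hA.eigenvalues_nonneg hr

lemma eq_of_sub_eq_smul_one_of_det_eq [Nonempty n] {A B : Matrix n n 𝕜} (hA : A.PosSemidef)
    (hB : B.PosSemidef) {r : ℝ} (hAB : A - B = r • 1) (hdet : A.det = B.det) : A = B := by
  rcases lt_trichotomy r 0 with hr | rfl | hr
  · have hBA : B = A + (-r) • 1 := by rw [neg_smul, ← hAB]; abel
    exact absurd hdet (by rw [hBA]; exact (hA.det_lt_det_add_smul_one (neg_pos.mpr hr)).ne)
  · rwa [zero_smul, sub_eq_zero] at hAB
  · have hAB' : A = B + r • 1 := by rw [← hAB]; abel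
    exact absurd hdet (by rw [hAB']; exact (hB.det_lt_det_add_smul_one hr).ne')

end PosSemidef

end Matrix

section Real

variable {n : Type*} [Fintype n] [DecidableEq n]

lemma exists_mul_transpose_eq_of_posSemidef [Nonempty n] {P : Matrix n n ℝ} (hP : P.PosSemidef)
    {t : ℝ} (hdet : P.det = t ^ 2) : ∃ X : Matrix n n ℝ, X * Xᵀ = P ∧ X.det = t := by
  open MatrixOrder in
  obtain ⟨S, hSS, hST, hdetS⟩ : ∃ S : Matrix n n ℝ, S * S = P ∧ Sᵀ = S ∧ S.det = |t| :=
    ⟨CFC.sqrt P, CFC.sqrt_mul_sqrt_self P hP.nonneg,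
      by simpa using (CFC.sqrt_nonneg P).posSemidef.isHermitian.eq,
      by rw [hP.det_sqrt, hdet]; simp [Real.sqrt_sq_eq_abs]⟩
  obtain ⟨R, hR, hdetR, -⟩ :=
    exists_reflection_mul_eq_self_of_det_eq_zero (det_zero : (0 : Matrix n n ℝ).det = 0)
  rcases abs_choice t with ht | ht
  · exact ⟨S, by rw [hST, hSS], by rw [hdetS, ht]⟩
  · refine ⟨S * R, ?_, by rw [det_mul, hdetS, ht, hdetR]; ring⟩
    rw [transpose_mul, Matrix.mul_assoc, ← Matrix.mul_assoc R, hR, Matrix.one_mul, hST, hSS]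

lemma exists_specialOrthogonal_mul_eq_of_mul_transpose_eq {X Y : Matrix n n ℝ} (h : X * Xᵀ = Y * Yᵀ)
    (hdet : X.det = Y.det) : ∃ C : Matrix n n ℝ, C * Cᵀ = 1 ∧ C.det = 1 ∧ Y = X * C := by
  simp only [← conjTranspose_eq_transpose_of_trivial] at h ⊢
  obtain ⟨C, hC, rfl⟩ := exists_unitary_mul_eq_of_mul_conjTranspose_eq h
  have hdetC : C.det * C.det = 1 := by
    simpa [det_mul, det_conjTranspose] using congrArg det hC
  rcases mul_self_eq_one_iff.mp hdetC with h1 | hm1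
  · exact ⟨C, hC, h1, rfl⟩
  · have hX : X.det = 0 := by rw [det_mul, hm1] at hdet; linarith
    obtain ⟨R, hR, hdetR, hXR⟩ := exists_reflection_mul_eq_self_of_det_eq_zero hX
    rw [← conjTranspose_eq_transpose_of_trivial] at hR
    refine ⟨R * C, ?_, by rw [det_mul, hdetR, hm1]; ring, by rw [← Matrix.mul_assoc, hXR]⟩
    rw [conjTranspose_mul, Matrix.mul_assoc, ← Matrix.mul_assoc C, hC, Matrix.one_mul, hR]

end Real

lemma phi_eq_mk_iff {n : ℕ} (X : Matrix (Fin n) (Fin n) ℝ) (a : SymSub n) (t : ℝ) :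
    phi n X = (Submodule.Quotient.mk a, t) ↔
      (∃ r : ℝ, X * Xᵀ = a + r • 1) ∧ X.det = t := by
  simp only [phi, Prod.mk.injEq, Submodule.Quotient.eq, lineI, Submodule.mem_span_singleton,
    Subtype.ext_iff, SetLike.val_smul, Submodule.coe_sub]
  refine and_congr_left' (exists_congr fun r => ?_)
  rw [eq_sub_iff_add_eq, add_comm, eq_comm]

/-- `φ(X) = (X Xᵀ + ℝ·I, det X)` is surjective, and its fibres coincide with the orbits
of the right action `X ↦ X C⁻¹` of `SO(n)`. -/
theorem stmt8 (n : ℕ) (hn : 1 ≤ n) :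
    Function.Surjective (phi n) ∧
    ∀ X Y : Matrix (Fin n) (Fin n) ℝ,
      phi n X = phi n Y ↔
        ∃ C : Matrix (Fin n) (Fin n) ℝ, C * Cᵀ = 1 ∧ C.det = 1 ∧ Y = X * C := by
  have : Nonempty (Fin n) := ⟨⟨0, hn⟩⟩
  have hgram : ∀ X : Matrix (Fin n) (Fin n) ℝ, (X * Xᵀ).PosSemidef := fun X => by
    simpa using posSemidef_self_mul_conjTranspose X
  refine ⟨?_, fun X Y => ?_⟩
  · rintro ⟨q, t⟩
    obtain ⟨a, rfl⟩ := Submodule.Quotient.mk_surjective (lineI n) q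
    have hA : (a : Matrix (Fin n) (Fin n) ℝ).IsHermitian := a.2
    obtain ⟨c, hc, hprod⟩ := exists_prod_add_eq hA.eigenvalues (sq_nonneg t)
    obtain ⟨X, hXX, hX⟩ := exists_mul_transpose_eq_of_posSemidef (hA.posSemidef_add_smul_one hc)
      (by simpa [hA.det_add_smul_one] using hprod)
    exact ⟨X, (phi_eq_mk_iff X a t).mpr ⟨⟨c, hXX⟩, hX⟩⟩
  · rw [show phi n Y = (Submodule.Quotient.mk ⟨Y * Yᵀ, mulT_mem_symSub Y⟩, Y.det) from rfl,
      phi_eq_mk_iff]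
    constructor
    · rintro ⟨⟨r, hr⟩, hdet⟩
      refine exists_specialOrthogonal_mul_eq_of_mul_transpose_eq ?_ hdet
      exact (hgram X).eq_of_sub_eq_smul_one_of_det_eq (hgram Y) (by rw [hr]; abel)
        (by simp [det_mul, hdet])
    · rintro ⟨C, hC, hdetC, rfl⟩
      refine ⟨⟨0, ?_⟩, by rw [det_mul, hdetC, mul_one]⟩
      rw [zero_smul, add_zero]
      show X * Xᵀ = X * C * (X * C)ᵀ
      rw [transpose_mul, Matrix.mul_assoc, ← Matrix.mul_assoc C, hC, Matrix.one_mul]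
end

section
/- Let n, m ≥ 0 and consider the map π : Matrix (Fin n) (Fin m) ℂ → Herm(n), π(X) = X X*, on complex n×m matrices, where X* is the conjugate transpose. Then the fibres of π coincide exactly with the orbits of the right action of the unitary group U(m) given by X ↦ X C⁻¹: that is, π(X) = π(Y) if and only if Y = X C for some C ∈ U(m). -/
/-!
If `X X* = Y Y*`, then `‖X* u‖ = ‖Y* u‖` for every vector `u`, because both squares equal
`⟪u, X X* u⟫`. Hence `X* u ↦ Y* u` is a well-defined linear isometry from the range of `X*`,
which extends to a linear isometry `U` of the whole space; its matrix `M` is unitary and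
`Y* = M X*`, i.e. `Y = X M*`.
-/

open Matrix

section LinearIsometry

variable {𝕜 E V : Type*} [RCLike 𝕜] [AddCommGroup E] [Module 𝕜 E]
  [NormedAddCommGroup V] [InnerProductSpace 𝕜 V] [FiniteDimensional 𝕜 V]

theorem LinearMap.exists_linearIsometry_apply_eq_of_norm_eq {f g : E →ₗ[𝕜] V}
    (h : ∀ u, ‖f u‖ = ‖g u‖) : ∃ U : V →ₗᵢ[𝕜] V, ∀ u, U (f u) = g u := by
  have hker : ker f ≤ ker g := fun u hu => by
    rwa [mem_ker, ← norm_eq_zero, ← h, norm_eq_zero]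
  let L : range f →ₗ[𝕜] V := (ker f).liftQ g hker ∘ₗ f.quotKerEquivRange.symm.toLinearMap
  have hL : ∀ u, L ⟨f u, mem_range_self f u⟩ = g u := fun u => by
    simp only [L, comp_apply, LinearEquiv.coe_coe, quotKerEquivRange_symm_apply_image]
    exact Submodule.liftQ_apply _ _ _
  let L' : range f →ₗᵢ[𝕜] V := ⟨L, by rintro ⟨_, u, rfl⟩; rw [hL]; exact (h u).symm⟩
  exact ⟨L'.extend, fun u => (L'.extend_apply ⟨f u, mem_range_self f u⟩).trans (hL u)⟩

end LinearIsometry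

namespace Matrix

variable {𝕜 l m : Type*} [RCLike 𝕜] [Fintype l] [DecidableEq l] [Fintype m] [DecidableEq m]

theorem inner_toEuclideanLin_mul_conjTranspose_self (A : Matrix l m 𝕜)
    (u : EuclideanSpace 𝕜 l) :
    inner 𝕜 u (toEuclideanLin (A * Aᴴ) u) = (‖toEuclideanLin Aᴴ u‖ : 𝕜) ^ 2 := by
  rw [toLpLin_mul_same, LinearMap.comp_apply, toEuclideanLin_conjTranspose_eq_adjoint,
    ← LinearMap.adjoint_inner_left]
  exact inner_self_eq_norm_sq_to_K _

theorem norm_toEuclideanLin_conjTranspose_eq {A B : Matrix l m 𝕜} (h : A * Aᴴ = B * Bᴴ)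
    (u : EuclideanSpace 𝕜 l) :
    ‖toEuclideanLin Aᴴ u‖ = ‖toEuclideanLin Bᴴ u‖ := by
  have hsq : (‖toEuclideanLin Aᴴ u‖ : 𝕜) ^ 2 = (‖toEuclideanLin Bᴴ u‖ : 𝕜) ^ 2 := by
    rw [← inner_toEuclideanLin_mul_conjTranspose_self, h,
      inner_toEuclideanLin_mul_conjTranspose_self]
  exact (pow_left_inj₀ (norm_nonneg _) (norm_nonneg _) two_ne_zero).mp (mod_cast hsq)

theorem _root_.LinearIsometry.toEuclideanLin_symm_mem_unitaryGroup
    (U : EuclideanSpace 𝕜 m →ₗᵢ[𝕜] EuclideanSpace 𝕜 m) :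
    toEuclideanLin.symm U.toLinearMap ∈ unitaryGroup m 𝕜 :=
  (U.toLinearIsometryEquiv rfl).toMatrix_mem_unitaryGroup
    (EuclideanSpace.basisFun m 𝕜) (EuclideanSpace.basisFun m 𝕜)

theorem mul_conjTranspose_self_eq_iff {A B : Matrix l m 𝕜} :
    A * Aᴴ = B * Bᴴ ↔ ∃ C ∈ unitaryGroup m 𝕜, B = A * C := by
  constructor
  · intro h
    obtain ⟨U, hU⟩ := LinearMap.exists_linearIsometry_apply_eq_of_norm_eq
      (norm_toEuclideanLin_conjTranspose_eq h)
    set M := toEuclideanLin.symm U.toLinearMap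
    have hBM : Bᴴ = M * Aᴴ := toEuclideanLin.injective <| LinearMap.ext fun u => by
      simp [M, hU]
    refine ⟨star M, Unitary.star_mem U.toEuclideanLin_symm_mem_unitaryGroup, ?_⟩
    rw [← conjTranspose_conjTranspose B, hBM, conjTranspose_mul, conjTranspose_conjTranspose,
      star_eq_conjTranspose]
  · rintro ⟨C, hC, rfl⟩
    rw [conjTranspose_mul, Matrix.mul_assoc, ← Matrix.mul_assoc C, ← star_eq_conjTranspose,
      mem_unitaryGroup_iff.mp hC, Matrix.one_mul]

end Matrix

/-- The fibres of `π(X) = X X*` on complex `n × m` matrices coincide with the orbits of the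
right action `X ↦ X C⁻¹` of the unitary group `U(m)`. -/
theorem stmt12 (n m : ℕ) (X Y : Matrix (Fin n) (Fin m) ℂ) :
    X * Xᴴ = Y * Yᴴ ↔
      ∃ C : Matrix (Fin m) (Fin m) ℂ, C * Cᴴ = 1 ∧ Y = X * C := by
  simp only [mul_conjTranspose_self_eq_iff, mem_unitaryGroup_iff, star_eq_conjTranspose]
end
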